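/- Let k ≥ 3 and let λ_1 < λ_2 < ⋯ < λ_k be real numbers; take indices cyclically modulo k and write d_i = λ_{i+1} − λ_i and s_i = λ_{i+1} + λ_i. Set S₁ = Σ_{i=1}^k 1/d_i, S₂ = Σ_{i=1}^k s_i/d_i, and S₃ = Σ_{i=1}^k s_i²/d_i. Then S₁ > 0, S₃ > 0, and S₂² < S₁·S₃; consequently the quantity S₂/√(S₁·S₃) lies in the open interval (−1, 1). -/

import Mathlib

/-!
Put `t i = x + s i * y`. Since `t i * d i = G (λ_{i+1}) - G (λ_i)` for `G λ = y λ² + x λ`, the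
cyclic sums of `d` and of `t * d` telescope to `0`. All `d i` are positive except
`d_k = -(d_1 + ⋯ + d_{k-1})`, so with `A = ∑_{i<k} t_i² / d_i` Cauchy–Schwarz gives
`t_k² d_k² = (∑_{i<k} t_i d_i)² ≤ A ∑_{i<k} d_i³ < A |d_k|³`, the last step strict because
`k - 1 ≥ 2`. Hence `∑ t_i² / d_i = A - t_k² / |d_k| > 0` whenever `(x, y) ≠ 0`: the binary
quadratic form `S₁ x² + 2 S₂ x y + S₃ y²` is positive definite, which is the claim.
-/

open Finset

section PositiveWeights

variable {ι : Type*} {s : Finset ι} {d t : ι → ℝ}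

theorem Finset.sum_pow_three_lt_pow_three_sum (hd : ∀ i ∈ s, 0 < d i) (hs : 1 < #s) :
    ∑ i ∈ s, d i ^ 3 < (∑ i ∈ s, d i) ^ 3 := by
  set D := ∑ i ∈ s, d i
  have hne : s.Nonempty := card_pos.1 (by omega)
  have hlt : ∀ i ∈ s, d i < D := fun i hi => by
    obtain ⟨j, hj, hji⟩ := exists_mem_ne hs i
    exact single_lt_sum hji hi hj (hd j hj) fun m hm _ => (hd m hm).le
  calc ∑ i ∈ s, d i ^ 3 < ∑ i ∈ s, d i * D ^ 2 := by
        refine sum_lt_sum_of_nonempty hne fun i hi => ?_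
        have hdi := hd i hi
        nlinarith [mul_pos (mul_pos hdi (sub_pos.2 (hlt i hi))) (add_pos (hdi.trans (hlt i hi)) hdi)]
    _ = D ^ 3 := by rw [← sum_mul]; ring

theorem Finset.sq_sum_mul_lt_sum_sq_div_mul_pow_three (hd : ∀ i ∈ s, 0 < d i) (hs : 1 < #s)
    (ht : 0 < ∑ i ∈ s, t i ^ 2 / d i) :
    (∑ i ∈ s, t i * d i) ^ 2 < (∑ i ∈ s, t i ^ 2 / d i) * (∑ i ∈ s, d i) ^ 3 :=
  calc (∑ i ∈ s, t i * d i) ^ 2 ≤ (∑ i ∈ s, t i ^ 2 / d i) * ∑ i ∈ s, d i ^ 3 :=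
        sum_sq_le_sum_mul_sum_of_sq_le_mul s (fun i hi => div_nonneg (sq_nonneg _) (hd i hi).le)
          (fun i hi => (pow_pos (hd i hi) 3).le) fun i hi =>
            le_of_eq (by field_simp [(hd i hi).ne'])
    _ < _ := mul_lt_mul_of_pos_left (sum_pow_three_lt_pow_three_sum hd hs) ht

end PositiveWeights

theorem sum_sq_div_pos_of_sum_eq_zero {ι : Type*} [Fintype ι] [DecidableEq ι] {d t : ι → ℝ}
    (L : ι) (hι : 2 < Fintype.card ι) (hd : ∀ i ≠ L, 0 < d i) (hd0 : ∑ i, d i = 0)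
    (htd : ∑ i, t i * d i = 0) (ht : t ≠ 0) :
    0 < ∑ i, t i ^ 2 / d i := by
  set E := univ.erase L
  have hdE : ∀ i ∈ E, 0 < d i := fun i hi => hd i (ne_of_mem_erase hi)
  have hE : 1 < #E := by rw [card_erase_of_mem (mem_univ L), card_univ]; omega
  set D := ∑ i ∈ E, d i
  have hD : 0 < D := sum_pos hdE (card_pos.1 (by omega))
  have hdL : d L = -D := by linarith [sum_erase_add univ d (mem_univ L)]
  have htdE : ∑ i ∈ E, t i * d i = t L * D := by
    have h := sum_erase_add univ (fun i => t i * d i) (mem_univ L)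
    rw [htd, hdL] at h
    linarith
  set A := ∑ i ∈ E, t i ^ 2 / d i
  have hAnn : ∀ i ∈ E, 0 ≤ t i ^ 2 / d i := fun i hi => div_nonneg (sq_nonneg _) (hdE i hi).le
  have hA : 0 < A := by
    refine (sum_nonneg hAnn).lt_of_ne fun hA0 => ht ?_
    have htE : ∀ i ∈ E, t i = 0 := fun i hi => by
      simpa [(hdE i hi).ne'] using (sum_eq_zero_iff_of_nonneg hAnn).1 hA0.symm i hi
    have htL : t L = 0 := by
      refine (mul_eq_zero.1 ?_).resolve_right hD.ne'
      rw [← htdE]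
      exact sum_eq_zero fun i hi => by rw [htE i hi, zero_mul]
    funext i
    by_cases hi : i = L
    · rw [hi, htL, Pi.zero_apply]
    · exact htE i (mem_erase.2 ⟨hi, mem_univ i⟩)
  have hkey := sq_sum_mul_lt_sum_sq_div_mul_pow_three hdE hE hA
  rw [htdE] at hkey
  have htL : t L ^ 2 / D < A := by
    rw [div_lt_iff₀ hD]
    refine lt_of_mul_lt_mul_right ?_ (sq_nonneg D)
    linarith
  rw [← sum_erase_add univ _ (mem_univ L), hdL, div_neg]
  linarith

theorem Fintype.sum_sub_comp_add_right_eq_zero {G M : Type*} [AddGroup G] [Fintype G]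
    [AddCommGroup M] (f : G → M) (a : G) : ∑ i, (f (i + a) - f i) = 0 := by
  rw [sum_sub_distrib, sub_eq_zero]
  exact Fintype.sum_equiv (Equiv.addRight a) _ _ fun _ => rfl

theorem Finset.sum_add_mul_sq_div {ι : Type*} (u : Finset ι) (s d : ι → ℝ) (x y : ℝ) :
    ∑ i ∈ u, (x + s i * y) ^ 2 / d i =
      x ^ 2 * ∑ i ∈ u, 1 / d i + 2 * x * y * ∑ i ∈ u, s i / d i +
        y ^ 2 * ∑ i ∈ u, s i ^ 2 / d i := by
  simp only [mul_sum, ← sum_add_distrib]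
  exact sum_congr rfl fun i _ => by ring

section Cyclic

variable {k : ℕ} {lam : Fin k → ℝ}

theorem Fin.sum_sub_comp_add_one_eq_zero (hk : 1 < k) (f : Fin k → ℝ) :
    ∑ i, (f (i + ⟨1, hk⟩) - f i) = 0 :=
  haveI : NeZero k := ⟨by omega⟩
  Fintype.sum_sub_comp_add_right_eq_zero f _

theorem Fin.val_add_one_of_ne_last (hk : 1 < k) {i : Fin k} (hi : i ≠ ⟨k - 1, by omega⟩) :
    (i + ⟨1, hk⟩ : Fin k).val = i.val + 1 := by
  have hi' : i.val < k - 1 := lt_of_le_of_ne (Nat.le_sub_one_of_lt i.2) fun h => hi (Fin.ext h)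
  rw [Fin.val_add]
  exact Nat.mod_eq_of_lt (show i.val + 1 < k by omega)

theorem StrictMono.lt_comp_add_one_of_ne_last (hmono : StrictMono lam) (hk : 1 < k) {i : Fin k}
    (hi : i ≠ ⟨k - 1, by omega⟩) : lam i < lam (i + ⟨1, hk⟩) :=
  hmono (Fin.lt_def.2 (by rw [Fin.val_add_one_of_ne_last hk hi]; omega))

theorem cyclic_sum_sq_div_pos (hk : 2 < k) (hmono : StrictMono lam) {d s : Fin k → ℝ}
    (hd : ∀ i, d i = lam (i + ⟨1, by omega⟩) - lam i)
    (hs : ∀ i, s i = lam (i + ⟨1, by omega⟩) + lam i)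
    {x y : ℝ} (hxy : x ≠ 0 ∨ y ≠ 0) :
    0 < ∑ i, (x + s i * y) ^ 2 / d i := by
  have hk1 : 1 < k := by omega
  have hd0 : ∑ i, d i = 0 := by simp only [hd]; exact Fin.sum_sub_comp_add_one_eq_zero hk1 lam
  have htd : ∑ i, (x + s i * y) * d i = 0 := by
    simp only [hd, hs]
    convert Fin.sum_sub_comp_add_one_eq_zero hk1 (fun i => y * lam i ^ 2 + x * lam i) using 2
    ring
  let L : Fin k := ⟨k - 1, by omega⟩
  have h0 : (⟨0, by omega⟩ : Fin k) ≠ L := Fin.ne_of_val_ne (show 0 ≠ k - 1 by omega)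
  have h1 : (⟨1, hk1⟩ : Fin k) ≠ L := Fin.ne_of_val_ne (show 1 ≠ k - 1 by omega)
  have hs01 : s ⟨0, by omega⟩ < s ⟨1, hk1⟩ := by
    have l0 := hmono.lt_comp_add_one_of_ne_last hk1 h0
    have l1 := hmono.lt_comp_add_one_of_ne_last hk1 h1
    have e0 : (⟨0, by omega⟩ + ⟨1, hk1⟩ : Fin k) = ⟨1, hk1⟩ :=
      Fin.ext (Fin.val_add_one_of_ne_last hk1 h0)
    rw [e0] at l0
    rw [hs, hs, e0]
    linarith
  refine sum_sq_div_pos_of_sum_eq_zero L (by simpa using hk)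
    (fun i hi => hd i ▸ sub_pos.2 (hmono.lt_comp_add_one_of_ne_last hk1 hi)) hd0 htd ?_
  intro ht
  have ht0 := congrFun ht ⟨0, by omega⟩
  have ht1 := congrFun ht ⟨1, hk1⟩
  simp only [Pi.zero_apply] at ht0 ht1
  have hy : y = 0 := by nlinarith
  exact hxy.elim (fun hx => hx (by simpa [hy] using ht0)) (· hy)

end Cyclic

/-- For `k ≥ 3` and `λ_1 < ⋯ < λ_k`, with cyclic `d_i = λ_{i+1} - λ_i`,
`s_i = λ_{i+1} + λ_i`, and `S₁ = ∑ 1/d_i`, `S₂ = ∑ s_i/d_i`, `S₃ = ∑ s_i²/d_i`, one has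
`S₁ > 0`, `S₃ > 0`, `S₂² < S₁·S₃`, and hence `S₂/√(S₁·S₃) ∈ (-1, 1)`. -/
theorem cyclic_cauchy_binet_cosine_bound
    (k : ℕ) (hk : 3 ≤ k) (lam : Fin k → ℝ) (hmono : StrictMono lam)
    (d s : Fin k → ℝ)
    (hd : ∀ i, d i = lam (i + ⟨1, by omega⟩) - lam i)
    (hs : ∀ i, s i = lam (i + ⟨1, by omega⟩) + lam i)
    (S₁ S₂ S₃ : ℝ)
    (hS₁ : S₁ = ∑ i : Fin k, 1 / d i)
    (hS₂ : S₂ = ∑ i : Fin k, s i / d i)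
    (hS₃ : S₃ = ∑ i : Fin k, (s i) ^ 2 / d i) :
    0 < S₁ ∧ 0 < S₃ ∧ S₂ ^ 2 < S₁ * S₃ ∧
      -1 < S₂ / Real.sqrt (S₁ * S₃) ∧ S₂ / Real.sqrt (S₁ * S₃) < 1 := by
  have hQ (x y : ℝ) (hxy : x ≠ 0 ∨ y ≠ 0) : 0 < x ^ 2 * S₁ + 2 * x * y * S₂ + y ^ 2 * S₃ := by
    rw [hS₁, hS₂, hS₃, ← sum_add_mul_sq_div]
    exact cyclic_sum_sq_div_pos hk hmono hd hs hxy
  have h₁ : 0 < S₁ := by simpa using hQ 1 0 (by norm_num)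
  have h₃ : 0 < S₃ := by simpa using hQ 0 1 (by norm_num)
  have hdisc : S₂ ^ 2 < S₁ * S₃ := by
    have h := hQ S₂ (-S₁) (Or.inr (neg_ne_zero.2 h₁.ne'))
    nlinarith
  have hsqrt : 0 < Real.sqrt (S₁ * S₃) := Real.sqrt_pos.2 (mul_pos h₁ h₃)
  obtain ⟨hlo, hhi⟩ := Real.sq_lt.1 hdisc
  exact ⟨h₁, h₃, hdisc, by rwa [lt_div_iff₀ hsqrt, neg_one_mul], (div_lt_one hsqrt).2 hhi⟩
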